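/- Let $r$ be an odd prime, $x$ an integer coprime to $r$, and $t > h \ge 0$ integers such that the multiplicative order of $x$ modulo $r^t$ equals $r^h$. Then $r^{h+1}$ does not divide $\Psi_{r^h}(x) = 1 + x + \cdots + x^{r^h - 1}$. -/

import Mathlib

/-!
Since `x ^ (r ^ h) ≡ 1 (mod r)` and Fermat gives `x ^ (r ^ h) ≡ x (mod r)`, we have `r ∣ x - 1`.
Splitting `Ψ_{r^(k+1)}(x) = Ψ_{r^k}(x) · Ψ_r(x ^ (r ^ k))` and noting that `r` divides
`Ψ_r(y)` exactly once when `y ≡ 1 (mod r)` and `r` is odd, the `r`-adic valuation of `Ψ_{r^h}(x)`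
is exactly `h`.
-/

open Finset

theorem geom_sum_range_mul {R : Type*} [CommSemiring R] (x : R) (a b : ℕ) :
    ∑ i ∈ range (a * b), x ^ i = (∑ i ∈ range a, x ^ i) * ∑ j ∈ range b, (x ^ a) ^ j := by
  induction b with
  | zero => simp
  | succ b ih =>
    rw [Nat.mul_succ, sum_range_add, ih, sum_range_succ, ← pow_mul]
    simp only [pow_add, ← mul_sum]
    ring

theorem emultiplicity_geom_sum_prime_pow {R : Type*} [CommRing R] [IsDomain R] {p : ℕ}
    (hp : Prime (p : R)) (hp1 : Odd p) {x : R} (hx : (p : R) ∣ x - 1) (k : ℕ) :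
    emultiplicity (p : R) (∑ i ∈ range (p ^ k), x ^ i) = k := by
  induction k with
  | zero => simpa using emultiplicity_of_one_right hp.not_isUnit
  | succ k ih =>
    have hxk : (p : R) ∣ x ^ p ^ k - 1 :=
      hx.trans (by simpa only [one_pow] using sub_dvd_pow_sub_pow x 1 (p ^ k))
    have hxk' : ¬ (p : R) ∣ x ^ p ^ k := fun hd ↦
      hp.not_isUnit (isUnit_of_dvd_one (by simpa using dvd_sub hd hxk))
    have hfactor := emultiplicity_geom_sum₂_eq_one hp hp1 hxk hxk'
    simp only [one_pow, mul_one] at hfactor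
    rw [pow_succ, geom_sum_range_mul, emultiplicity_mul hp, ih, hfactor, Nat.cast_succ]

theorem Int.prime_dvd_sub_one_of_pow_prime_pow_eq_one {p : ℕ} [Fact p.Prime] {x : ℤ} {k : ℕ}
    (hx : (x : ZMod p) ^ p ^ k = 1) : (p : ℤ) ∣ x - 1 := by
  rw [ZMod.pow_card_pow] at hx
  exact (ZMod.intCast_eq_intCast_iff_dvd_sub 1 x p).mp (by simpa using hx.symm)

theorem stmt_11_general (r : ℕ) (hr : r.Prime) (hrodd : Odd r) (x : ℤ)
    (t h : ℕ) (hth : h < t)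
    (hord : orderOf (x : ZMod (r ^ t)) = r ^ h) :
    ¬ ((r : ℤ) ^ (h + 1) ∣ ∑ i ∈ Finset.range (r ^ h), x ^ i) := by
  have := Fact.mk hr
  have hpow : (x : ZMod r) ^ r ^ h = 1 := by
    have hpow_t : (x : ZMod (r ^ t)) ^ r ^ h = 1 := hord ▸ pow_orderOf_eq_one _
    simpa only [map_pow, map_intCast, map_one] using
      congrArg (ZMod.castHom (dvd_pow_self r (by omega : t ≠ 0)) (ZMod r)) hpow_t
  have hx := Int.prime_dvd_sub_one_of_pow_prime_pow_eq_one hpow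
  rw [pow_dvd_iff_le_emultiplicity,
    emultiplicity_geom_sum_prime_pow (Nat.prime_iff_prime_int.mp hr) hrodd hx h]
  norm_cast
  omega

theorem stmt_11 (r : ℕ) (hr : r.Prime) (hrodd : Odd r) (x : ℤ) (hcop : Int.gcd x r = 1)
    (t h : ℕ) (hth : h < t)
    (hord : orderOf (x : ZMod (r ^ t)) = r ^ h) :
    ¬ ((r : ℤ) ^ (h + 1) ∣ ∑ i ∈ Finset.range (r ^ h), x ^ i) :=
  stmt_11_general r hr hrodd x t h hth hord
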